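/- arXiv:1803.07097 — 7 statements merged into one kernel-verified Lean document; each statement's English description precedes it below -/
import Mathlib

section
/- The transformation algorithm that repeatedly picks a lowest gap-2+ chord in an n-vertex circle graph, contracts its lower area to a new inner vertex, and resolves at most 2k-1 crossing points when a gap-k chord is picked, terminates after at most n iterations and produces a planar graph with at most 6n vertices. -/
open Finset

lemma card_le_of_two_le_of_sum_le {ι : Type*} (s : Finset ι) (k : ι → ℕ) (n : ℕ)
    (hk : ∀ i ∈ s, 2 ≤ k i) (hsum : ∑ i ∈ s, k i ≤ 2 * n) : #s ≤ n := by
  have : #s * 2 ≤ ∑ i ∈ s, k i := by simpa using s.card_nsmul_le_sum k 2 hk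
  omega

lemma sum_two_mul_sub_one_le {ι : Type*} (s : Finset ι) (k : ι → ℕ) :
    ∑ i ∈ s, (2 * k i - 1) ≤ 2 * ∑ i ∈ s, k i := by
  rw [mul_sum]
  exact sum_le_sum fun i _ => Nat.sub_le _ _

theorem stmt2_general (n t : ℕ) (k : ℕ → ℕ)
    (hk2 : ∀ i < t, 2 ≤ k i)
    (hksum : (∑ i ∈ Finset.range t, k i) ≤ 2 * n) :
    t ≤ n ∧ n + t + (∑ i ∈ Finset.range t, (2 * k i - 1)) ≤ 6 * n := by
  have ht : t ≤ n := by
    simpa using card_le_of_two_le_of_sum_le (range t) k n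
      (fun i hi => hk2 i (mem_range.mp hi)) hksum
  have hplanar := sum_two_mul_sub_one_le (range t) k
  exact ⟨ht, by omega⟩

/-- The contraction loop on an `n`-vertex circle graph terminates after at
most `n` iterations and the resulting planar graph has at most `6 n` vertices.
`u i` is the number of cycle vertices before iteration `i`, `k i` is the gap of the
chord picked at iteration `i`; each iteration removes the `k i` vertices strictly inside
the arc and adds one new vertex, and planarization adds at most `2 * k i - 1` inner
vertices; the sum of the gaps is at most `2 * n`. -/
theorem stmt2 (n t : ℕ) (u k : ℕ → ℕ)
    (hu0 : u 0 = n)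
    (hk2 : ∀ i < t, 2 ≤ k i)
    (hstep : ∀ i < t, u (i + 1) + k i = u i + 1)
    (hksum : (∑ i ∈ Finset.range t, k i) ≤ 2 * n) :
    t ≤ n ∧ n + t + (∑ i ∈ Finset.range t, (2 * k i - 1)) ≤ 6 * n :=
  stmt2_general n t k hk2 hksum
end

section
/- Under the level assignment of Algorithm 3 (calc_level), for vertices t_i^ell and t_j^ell of T^ell with i > j, the final in-level of t_i^ell is strictly greater than the final out-level of t_j^ell. -/
/-- Cumulative shift `S i = Δ_0 + ⋯ + Δ_i` of Algorithm 3 (calc_level):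
for the `i`-th vertex of `T^ℓ` with temporary in-level `f i` and temporary
out-level `g i`, `Δ_{i+1} = max 0 (max_{j ≤ i} (ℓout_j - j/n) - (ℓin_{i+1} - (i+1)/n))`,
where current levels are the temporary ones plus the shifts applied so far.
The final levels are `ℓin i = f i + shiftSum f g n i` and `ℓout i = g i + shiftSum f g n i`. -/
noncomputable def shiftSum (f g : ℕ → ℚ) (n : ℕ) : ℕ → ℚ
  | 0 => 0
  | i + 1 =>
    shiftSum f g n i +
      max 0 (((Finset.range (i + 1)).attach.sup'
          (Finset.attach_nonempty_iff.mpr Finset.nonempty_range_add_one)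
          fun j => g j.1 + shiftSum f g n j.1 - (j.1 : ℚ) / n) -
        (f (i + 1) + shiftSum f g n i - ((i + 1 : ℕ) : ℚ) / n))
  decreasing_by
  all_goals first
    | exact Nat.lt_succ_self i
    | exact Finset.mem_range.mp j.2

/-! The shift `Δ_{k+1}` is chosen exactly so that, after it is applied, `ℓin_{k+1} - (k+1)/n`
dominates `ℓout_j - j/n` for every `j ≤ k`. Since `j/n < (k+1)/n` for `n > 0`, this gives the
strict inequality `ℓout_j < ℓin_{k+1}`. -/

theorem le_add_shiftSum_succ_sub_div (f g : ℕ → ℚ) (n : ℕ) {j k : ℕ} (hjk : j ≤ k) :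
    g j + shiftSum f g n j - (j : ℚ) / n ≤
      f (k + 1) + shiftSum f g n (k + 1) - ((k + 1 : ℕ) : ℚ) / n := by
  set M := (Finset.range (k + 1)).attach.sup'
    (Finset.attach_nonempty_iff.mpr Finset.nonempty_range_add_one)
    fun j => g j.1 + shiftSum f g n j.1 - (j.1 : ℚ) / n
  have hj_le_M : g j + shiftSum f g n j - (j : ℚ) / n ≤ M :=
    Finset.le_sup' (fun j : Finset.range (k + 1) => g j.1 + shiftSum f g n j.1 - (j.1 : ℚ) / n)
      (Finset.mem_attach _ ⟨j, Finset.mem_range.mpr (Nat.lt_succ_of_le hjk)⟩)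
  have hM_le : M - (f (k + 1) + shiftSum f g n k - ((k + 1 : ℕ) : ℚ) / n) ≤
      shiftSum f g n (k + 1) - shiftSum f g n k := by
    rw [shiftSum, add_sub_cancel_left]
    exact le_max_right _ _
  linarith

theorem stmt3_general (m n : ℕ) (hmn : m < n) (f g : ℕ → ℚ) :
    ∀ i j, j < i → i < m →
      g j + shiftSum f g n j < f i + shiftSum f g n i := by
  intro i j hji him
  obtain ⟨k, rfl⟩ : ∃ k, i = k + 1 := ⟨i - 1, by omega⟩
  have hn : (0 : ℚ) < n := by exact_mod_cast (by omega : 0 < n)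
  have hoffset : (j : ℚ) / n < ((k + 1 : ℕ) : ℚ) / n := by
    gcongr
  linarith [le_add_shiftSum_succ_sub_div f g n (Nat.le_of_lt_succ hji)]

/-- under the level assignment of Algorithm 3, if `i > j` then the final
in-level of `t_i^ℓ` is strictly greater than the final out-level of `t_j^ℓ`.
Temporary levels are `f i = a i + i / n` and `g i = b i + i / n` with integers
`a i`, `b i` and `n > m`. -/
theorem stmt3 (m n : ℕ) (hmn : m < n) (a b : ℕ → ℤ) (f g : ℕ → ℚ)
    (hf : ∀ i < m, f i = (a i : ℚ) + (i : ℚ) / n)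
    (hg : ∀ i < m, g i = (b i : ℚ) + (i : ℚ) / n) :
    ∀ i j, j < i → i < m →
      g j + shiftSum f g n j < f i + shiftSum f g n i :=
  stmt3_general m n hmn f g
end

section
/- In a circle graph obtained from reachability of a plane graph, if t_i^ell, t_j^ell are on one arc and T^u is on the complementary arc (with indexing orders as in the algorithm), and i > j, then max{k : (t_i^ell, t_k^u) is an edge} >= max{k : (t_j^ell, t_k^u) is an edge}; equivalently, the temporary in-levels satisfy t_in(t_i^ell) > t_in(t_j^ell). -/
open Finset

def CrossingClosed {α β : Type*} [LT α] [LT β] (E : α → β → Prop) : Prop :=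
  ∀ (i j : α) (k k' : β), E i k → E j k' → j < i → k < k' → E i k'

theorem CrossingClosed.max'_neighbors_le {α β : Type*} [LT α] [LinearOrder β] [Fintype β]
    {E : α → β → Prop} [∀ a b, Decidable (E a b)] (hE : CrossingClosed E) {i j : α}
    (hij : j < i) (hi : (univ.filter fun k => E i k).Nonempty)
    (hj : (univ.filter fun k => E j k).Nonempty) :
    (univ.filter fun k => E j k).max' hj ≤ (univ.filter fun k => E i k).max' hi := by
  have hEi : E i ((univ.filter fun k => E i k).max' hi) := (mem_filter.1 (max'_mem _ hi)).2
  have hEj : E j ((univ.filter fun k => E j k).max' hj) := (mem_filter.1 (max'_mem _ hj)).2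
  by_contra! hlt
  exact hlt.not_ge (le_max' _ _ (mem_filter.2 ⟨mem_univ _, hE _ _ _ _ hEi hEj hij hlt⟩))

/-- in a circle graph obtained from reachability of a plane graph, with
`T^ℓ = (t_0^ℓ, …, t_{m-1}^ℓ)` on one arc and `T^u = (t_0^u, …, t_{m'-1}^u)` on the
complementary arc, the edge set `E` (from lower to upper vertices, represented by
indices) is closed under the crossing rule: if `(t_i^ℓ, t_k^u)` and `(t_j^ℓ, t_{k'}^u)`
are edges that cross (`j < i` and `k < k'`) then `(t_i^ℓ, t_{k'}^u)` is an edge.  Then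
for `i > j`, `max {k | E i k} ≥ max {k | E j k}`; equivalently the temporary in-levels
`t_in(t_i^ℓ) = max{k | E i k} + i / n` satisfy `t_in(t_i^ℓ) > t_in(t_j^ℓ)`. -/
theorem stmt4 (m m' n : ℕ) (hn : 0 < n)
    (E : Fin m → Fin m' → Prop) [∀ i k, Decidable (E i k)]
    (hclosure : ∀ (i j : Fin m) (k k' : Fin m'),
      E i k → E j k' → j < i → k < k' → E i k')
    (i j : Fin m) (hij : j < i)
    (hi : (Finset.univ.filter fun k => E i k).Nonempty)
    (hj : (Finset.univ.filter fun k => E j k).Nonempty) :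
    (Finset.univ.filter fun k => E j k).max' hj ≤
        (Finset.univ.filter fun k => E i k).max' hi ∧
      ((((Finset.univ.filter fun k => E j k).max' hj).val : ℚ) + (j.val : ℚ) / n <
        (((Finset.univ.filter fun k => E i k).max' hi).val : ℚ) + (i.val : ℚ) / n) := by
  have hle := CrossingClosed.max'_neighbors_le hclosure hij hi hj
  refine ⟨hle, add_lt_add_of_le_of_lt (by exact_mod_cast hle) ?_⟩
  exact div_lt_div_of_pos_right (by exact_mod_cast hij) (by exact_mod_cast hn)
end

section
/- In a circle graph closed under the crossing rule, with T^ell and T^u indexed as in the algorithm, if i > j then min{k : (t_k^u, t_i^ell) is an edge} >= min{k : (t_k^u, t_j^ell) is an edge}; equivalently, the temporary out-levels satisfy t_out(t_i^ell) > t_out(t_j^ell). -/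
/-! If the least `k` with `E k i` were smaller than the least `k'` with `E k' j`, these two
edges would cross, so the crossing rule gives `E k j`, contradicting the minimality of `k'`.
The out-levels then compare strictly because the fractional parts `i / n` break ties. -/

open Finset

theorem min'_filter_le_of_crossing {α β : Type*} [Fintype α] [LinearOrder α]
    (E : α → β → Prop) [∀ k i, Decidable (E k i)] {i j : β}
    (hcross : ∀ k k', E k i → E k' j → k < k' → E k j)
    (hi : (univ.filter fun k => E k i).Nonempty) (hj : (univ.filter fun k => E k j).Nonempty) :
    (univ.filter fun k => E k j).min' hj ≤ (univ.filter fun k => E k i).min' hi := by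
  by_contra! hlt
  have hEi := (mem_filter.1 ((univ.filter fun k => E k i).min'_mem hi)).2
  have hEj := (mem_filter.1 ((univ.filter fun k => E k j).min'_mem hj)).2
  exact hlt.not_ge <| (univ.filter fun k => E k j).min'_le _ <|
    mem_filter.2 ⟨mem_univ _, hcross _ _ hEi hEj hlt⟩

/-- in a circle graph closed under the crossing rule, with
`T^ℓ = (t_0^ℓ, …, t_{m-1}^ℓ)` on one arc and `T^u = (t_0^u, …, t_{m'-1}^u)` on the
complementary arc, `E k i` meaning that `(t_k^u, t_i^ℓ)` is an edge, the crossing rule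
reads: if `(t_k^u, t_i^ℓ)` and `(t_{k'}^u, t_j^ℓ)` cross (`j < i` and `k < k'`) then
`(t_k^u, t_j^ℓ)` is an edge.  Then for `i > j`,
`min {k | E k i} ≥ min {k | E k j}`; equivalently the temporary out-levels
`t_out(t_i^ℓ) = min{k | E k i} + i / n` satisfy `t_out(t_i^ℓ) > t_out(t_j^ℓ)`. -/
theorem stmt5 (m m' n : ℕ) (hn : 0 < n)
    (E : Fin m' → Fin m → Prop) [∀ k i, Decidable (E k i)]
    (hclosure : ∀ (k k' : Fin m') (i j : Fin m),
      E k i → E k' j → j < i → k < k' → E k j)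
    (i j : Fin m) (hij : j < i)
    (hi : (Finset.univ.filter fun k => E k i).Nonempty)
    (hj : (Finset.univ.filter fun k => E k j).Nonempty) :
    (Finset.univ.filter fun k => E k j).min' hj ≤
        (Finset.univ.filter fun k => E k i).min' hi ∧
      ((((Finset.univ.filter fun k => E k j).min' hj).val : ℚ) + (j.val : ℚ) / n <
        (((Finset.univ.filter fun k => E k i).min' hi).val : ℚ) + (i.val : ℚ) / n) := by
  have hmin := min'_filter_le_of_crossing E (fun k k' hk hk' => hclosure k k' i j hk hk' hij) hi hj
  refine ⟨hmin, add_lt_add_of_le_of_lt (by exact_mod_cast hmin) ?_⟩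
  exact div_lt_div_of_pos_right (by exact_mod_cast hij) (by exact_mod_cast hn)
end

section
/- Under the level assignment of Algorithm 3, for any p, q: if the temporary in-level of t_p^ell is at least the temporary out-level of t_q^ell, then the final in-level of t_p^ell is at least the final out-level of t_q^ell. -/
section IntPart

variable {K : Type*} [Field K] [LinearOrder K] [IsStrictOrderedRing K]

theorem Int.le_of_cast_add_div_le_cast_add_div {x y : ℤ} {i j n : ℕ} (hj : j < n)
    (h : (x : K) + i / n ≤ y + j / n) : x ≤ y := by
  have hn : (0 : K) < n := by exact_mod_cast (by omega : 0 < n)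
  have hi : (0 : K) ≤ i / n := by positivity
  have hj : (j : K) / n < 1 := (div_lt_one hn).mpr (by exact_mod_cast hj)
  have : (x : K) < (y + 1 : ℤ) := by push_cast; linarith
  exact Int.lt_add_one_iff.mp (by exact_mod_cast this)

theorem Int.lt_of_cast_add_div_le_cast_add_div {x y : ℤ} {i j n : ℕ} (hji : j < i)
    (hi : i < n) (h : (x : K) + i / n ≤ y + j / n) : x < y := by
  have hn : (0 : K) < n := by exact_mod_cast (by omega : 0 < n)
  have : (j : K) / n < i / n := by gcongr
  exact_mod_cast (by linarith : (x : K) < y)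

end IntPart

section shiftSum

variable (f g : ℕ → ℚ) (n : ℕ)

theorem shiftSum_le_succ (i : ℕ) : shiftSum f g n i ≤ shiftSum f g n (i + 1) := by
  rw [shiftSum]
  exact le_add_of_nonneg_right (le_max_left _ _)

theorem monotone_shiftSum : Monotone (shiftSum f g n) :=
  monotone_nat_of_le_succ (shiftSum_le_succ f g n)

variable {f g n}

theorem shiftSum_succ_eq_of_forall_le {i : ℕ}
    (h : ∀ j ≤ i, g j + shiftSum f g n j - j / n ≤
      f (i + 1) + shiftSum f g n i - ((i + 1 : ℕ) : ℚ) / n) :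
    shiftSum f g n (i + 1) = shiftSum f g n i := by
  rw [shiftSum, max_eq_left, add_zero]
  refine sub_nonpos.mpr (Finset.sup'_le _ _ fun j _ => h j ?_)
  exact Nat.lt_succ_iff.mp (Finset.mem_range.mp j.2)

theorem shiftSum_eq_of_forall_le {p q : ℕ} (c : ℚ) (hpq : p ≤ q)
    (hle : ∀ k ≤ p, g k + shiftSum f g n k - k / n ≤ c + shiftSum f g n p)
    (hbetween : ∀ k, p < k → k ≤ q → g k - k / n ≤ c ∧ c ≤ f k - k / n) :
    shiftSum f g n q = shiftSum f g n p := by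
  suffices ∀ j, p ≤ j → j ≤ q → shiftSum f g n j = shiftSum f g n p ∧
      ∀ k ≤ j, g k + shiftSum f g n k - k / n ≤ c + shiftSum f g n p from
    (this q hpq le_rfl).1
  intro j hpj
  induction j, hpj using Nat.le_induction with
  | base => exact fun _ => ⟨rfl, hle⟩
  | succ j hpj ih =>
    intro hjq
    obtain ⟨hSj, hlej⟩ := ih (by omega)
    obtain ⟨hgj, hfj⟩ := hbetween (j + 1) (by omega) hjq
    have hSj1 : shiftSum f g n (j + 1) = shiftSum f g n p := by
      rw [shiftSum_succ_eq_of_forall_le fun k hk => ?_, hSj]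
      linarith [hlej k hk]
    refine ⟨hSj1, fun k hk => ?_⟩
    rcases Nat.le_succ_iff.mp hk with hk | rfl
    · exact hlej k hk
    · rw [hSj1]; linarith

variable {a b : ℕ → ℤ}

theorem shiftSum_eq_of_intPart_le {p q : ℕ} (hpq : p ≤ q)
    (hf : ∀ k ≤ q, f k = a k + k / n) (hg : ∀ k ≤ q, g k = b k + k / n)
    (hb : ∀ k ≤ q, b k ≤ a p) (ha : ∀ k, p < k → k ≤ q → a p ≤ a k) :
    shiftSum f g n q = shiftSum f g n p := by
  refine shiftSum_eq_of_forall_le (a p) hpq (fun k hk => ?_) fun k hpk hkq => ?_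
  · have hS := monotone_shiftSum f g n hk
    have hbk : (b k : ℚ) ≤ a p := by exact_mod_cast hb k (hk.trans hpq)
    rw [hg k (hk.trans hpq)]
    linarith
  · rw [hg k hkq, hf k hkq, add_sub_cancel_right, add_sub_cancel_right]
    exact ⟨by exact_mod_cast hb k hkq, by exact_mod_cast ha k hpk hkq⟩

end shiftSum

/-- the Δ-shifting of Algorithm 3 preserves the comparison between
temporary in- and out-levels: if the temporary in-level of `t_p^ℓ` is at least the
temporary out-level of `t_q^ℓ`, the same holds for the final levels.
Temporary levels have the form `integer + index / n` and are strictly increasing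
in the index. -/
theorem stmt6 (m n : ℕ) (hmn : m < n) (a b : ℕ → ℤ) (f g : ℕ → ℚ)
    (hf : ∀ i < m, f i = (a i : ℚ) + (i : ℚ) / n)
    (hg : ∀ i < m, g i = (b i : ℚ) + (i : ℚ) / n)
    (hfmono : ∀ i j, j < i → i < m → f j < f i)
    (hgmono : ∀ i j, j < i → i < m → g j < g i) :
    ∀ p q, p < m → q < m → g q ≤ f p →
      g q + shiftSum f g n q ≤ f p + shiftSum f g n p := by
  intro p q hp hq hgf
  rcases le_or_gt q p with hqp | hpq
  · linarith [monotone_shiftSum f g n hqp]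
  have hgk_le (k : ℕ) (hk : k ≤ q) : (b k : ℚ) + k / n ≤ a p + p / n := by
    rw [← hg k (by omega), ← hf p hp]
    exact (hk.eq_or_lt.elim (fun h => h ▸ le_rfl) fun h => (hgmono q k h hq).le).trans hgf
  have hb (k : ℕ) (hk : k ≤ q) : b k ≤ a p :=
    Int.le_of_cast_add_div_le_cast_add_div (by omega) (hgk_le k hk)
  have ha (k : ℕ) (hpk : p < k) (hkq : k ≤ q) : a p ≤ a k := by
    have hfpk := hfmono k p hpk (by omega)
    rw [hf p hp, hf k (by omega)] at hfpk
    exact Int.le_of_cast_add_div_le_cast_add_div (by omega) hfpk.le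
  have hSq : shiftSum f g n q = shiftSum f g n p :=
    shiftSum_eq_of_intPart_le hpq.le (fun k hk => hf k (by omega)) (fun k hk => hg k (by omega))
      hb ha
  have hbq : (b q : ℚ) + 1 ≤ a p := by
    exact_mod_cast Int.lt_of_cast_add_div_le_cast_add_div hpq (by omega) (hgk_le q le_rfl)
  have hn : (0 : ℚ) < n := by exact_mod_cast (by omega : 0 < n)
  have hq1 : (q : ℚ) / n < 1 := (div_lt_one hn).mpr (by exact_mod_cast hq.trans hmn)
  rw [hSq, hg q hq, hf p hp]
  linarith [show (0 : ℚ) ≤ p / n by positivity]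
end

section
/- If a token tour in gadget graph G_{t'} passes through the bundling vertex v_*^t via two edges, entering from the lower area and leaving into the upper area of the chord e_*^t, and the source edges of the two labels used are (t_p^ell, t_i^u) and (t_q^ell, t_j^u) respectively, then i >= j and p >= q. -/
theorem stmt10_general (m m' : ℕ)
    (E : Fin m → Fin m' → Prop)
    (ellin : Fin m → ℚ)
    (hmono : ∀ i j : Fin m, j < i → ellin j < ellin i)
    (hclosure : ∀ (p' q' : Fin m) (i' j' : Fin m'),
      E p' i' → E q' j' → q' ≤ p' → i' < j' → E p' j')
    (p q : Fin m) (i j : Fin m')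
    (htoken : ellin q ≤ ellin p)
    (hpi : E p i) (hmax : ∀ k, E p k → k ≤ i)
    (hqj : E q j) :
    j ≤ i ∧ q ≤ p := by
  have hqp : q ≤ p := (StrictMono.le_iff_le fun a b hab => hmono b a hab).mp htoken
  refine ⟨le_of_not_gt fun hij => ?_, hqp⟩
  exact (hmax j (hclosure p q i j hpi hqj hqp hij)).not_gt hij

/-- a token tour entering the bundling vertex `v_*^t` from the lower
area and leaving into the upper area of the chord `e_*^t`.  `E p i` means
`(t_p^ℓ, t_i^u)` is an edge of the circle graph; `ellin` is the final in-level
function on `T^ℓ` produced by Algorithm 3 (strictly increasing in the index).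
The entering label has out-level `ellin p`, the leaving label has in-level `ellin q`
(taken at the minimizing lower vertex `t_q^ℓ` with edge to the exit vertex
`t_j^u`), and the token rule forces `ellin q ≤ ellin p`.  The source edges are
`(t_p^ℓ, t_i^u)` with `i` maximal for `p`, and `(t_q^ℓ, t_j^u)`.  The circle-graph
edges are closed under the crossing rule.  Then `i ≥ j` and `p ≥ q`. -/
theorem stmt10 (m m' : ℕ)
    (E : Fin m → Fin m' → Prop)
    (ellin : Fin m → ℚ)
    (hmono : ∀ i j : Fin m, j < i → ellin j < ellin i)
    (hclosure : ∀ (p' q' : Fin m) (i' j' : Fin m'),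
      E p' i' → E q' j' → q' ≤ p' → i' < j' → E p' j')
    (p q : Fin m) (i j : Fin m')
    (htoken : ellin q ≤ ellin p)
    (hpi : E p i) (hmax : ∀ k, E p k → k ≤ i)
    (hqj : E q j) (hqmin : ∀ r : Fin m, E r j → ellin q ≤ ellin r) :
    j ≤ i ∧ q ≤ p :=
  stmt10_general m m' E ellin hmono hclosure p q i j htoken hpi hmax hqj
end

section
/- For the parent map maintained by the transformation algorithm, cyclic order is preserved: if u, v, w are vertices of the current cycle U_t in clockwise order in G_t[U_t], then any rim vertices x, y, z of the original circle graph with p^t(x)=u, p^t(y)=v, p^t(z)=w appear in clockwise order on the original cycle. -/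
/-- A run of the cycle-contraction process of the transformation algorithm.
`U t` is the cycle of the circle-graph part at step `t` (as a list in clockwise order,
up to rotation), `p t` is the parent map from original rim vertices (numbers `< n`,
placed clockwise as `0, 1, …, n-1`) to the current cycle, `a t`/`b t` are the tail and
head of the chord `e_*^t` picked at step `t`, and `vstar t` is the fresh bundling
vertex replacing the open arc (of length `≥ 2`) strictly between `a t` and `b t`. -/
structure ContractionRun (n : ℕ) where
  T : ℕ
  U : ℕ → List ℕ
  p : ℕ → ℕ → ℕ
  a : ℕ → ℕ
  b : ℕ → ℕ
  vstar : ℕ → ℕ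
  hU0 : U 0 = List.range n
  hp0 : ∀ x, x < n → p 0 x = x
  hstep : ∀ t, t < T → ∃ (seg post : List ℕ) (rot : ℕ),
    (U t).rotate rot = a t :: (seg ++ b t :: post) ∧
    2 ≤ seg.length ∧
    vstar t ∉ U t ∧
    U (t + 1) = a t :: vstar t :: b t :: post ∧
    (∀ x, x < n → p (t + 1) x = if p t x ∈ seg then vstar t else p t x)

/-- `x`, `y`, `z` occur in this clockwise cyclic order on the cycle given by the
list `l`. -/
def CyclicTriple (l : List ℕ) (x y z : ℕ) : Prop :=
  ∃ (r i j k : ℕ), i < j ∧ j < k ∧ (l.rotate r)[i]? = some x ∧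
    (l.rotate r)[j]? = some y ∧ (l.rotate r)[k]? = some z

/-!
Undoing step `t` (replacing `v_*` by the arc it bundled) turns `U (t + 1)` into a rotation
of `U t`, and the arc substituted for `p (t + 1) x` contains `p t x`. Substituting blocks for
the entries of a cyclic list keeps elements picked from three positions in cyclic order, so
the claim follows by descending induction to `t = 0`, where `p` is the identity.
-/

namespace List

variable {α β : Type*}

theorem cons_sublist_of_getElem?_eq {L l : List α} {i : ℕ} {x : α} (hx : L[i]? = some x)
    (hl : l <+ L.drop (i + 1)) : x :: l <+ L := by
  obtain ⟨hi, rfl⟩ := getElem?_eq_some_iff.mp hx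
  calc L[i] :: l <+ L[i] :: L.drop (i + 1) := hl.cons_cons _
    _ = L.drop i := (drop_eq_getElem_cons hi).symm
    _ <+ L := drop_sublist _ _

theorem triple_sublist_iff {L : List α} {x y z : α} :
    [x, y, z] <+ L ↔ ∃ i j k : ℕ, i < j ∧ j < k ∧
      L[i]? = some x ∧ L[j]? = some y ∧ L[k]? = some z := by
  constructor
  · intro h
    obtain ⟨f, hf⟩ := sublist_iff_exists_orderEmbedding_getElem?_eq.mp h
    exact ⟨f 0, f 1, f 2, f.strictMono (by norm_num : (0 : ℕ) < 1),
      f.strictMono (by norm_num : (1 : ℕ) < 2), (hf 0).symm, (hf 1).symm, (hf 2).symm⟩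
  · rintro ⟨i, j, k, hij, hjk, hx, hy, hz⟩
    refine cons_sublist_of_getElem?_eq hx (cons_sublist_of_getElem?_eq (i := j - (i + 1)) ?_
      (cons_sublist_of_getElem?_eq (i := k - (j + 1)) ?_ (nil_sublist _)))
    · rwa [getElem?_drop, show i + 1 + (j - (i + 1)) = j by omega]
    · rwa [drop_drop, getElem?_drop, show i + 1 + (j - (i + 1) + 1) + (k - (j + 1)) = k by omega]

theorem IsRotated.flatMap {l l' : List α} (h : l ~r l') (f : α → List β) :
    l.flatMap f ~r l'.flatMap f := by
  obtain ⟨n, rfl⟩ := h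
  rw [rotate_eq_drop_append_take_mod, flatMap_append]
  conv_lhs => rw [← take_append_drop (n % l.length) l, flatMap_append]
  exact isRotated_append

end List

open List

namespace CyclicTriple

theorem iff_exists_sublist_rotate {l : List ℕ} {x y z : ℕ} :
    CyclicTriple l x y z ↔ ∃ r, [x, y, z] <+ l.rotate r := by
  simp only [CyclicTriple, triple_sublist_iff]

theorem of_isRotated {l l' : List ℕ} {x y z : ℕ} (h : CyclicTriple l x y z) (hl : l ~r l') :
    CyclicTriple l' x y z := by
  obtain ⟨n, rfl⟩ := hl.symm
  obtain ⟨r, hr⟩ := iff_exists_sublist_rotate.mp h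
  exact iff_exists_sublist_rotate.mpr ⟨n + r, by rwa [← rotate_rotate]⟩

theorem flatMap {l : List ℕ} {f : ℕ → List ℕ} {u v w x y z : ℕ} (h : CyclicTriple l u v w)
    (hx : x ∈ f u) (hy : y ∈ f v) (hz : z ∈ f w) : CyclicTriple (l.flatMap f) x y z := by
  obtain ⟨r, hr⟩ := iff_exists_sublist_rotate.mp h
  obtain ⟨s, hs⟩ := (IsRotated.forall l r).flatMap f |>.symm
  refine iff_exists_sublist_rotate.mpr ⟨s, hs ▸ ?_⟩
  calc [x, y, z] <+ f u ++ (f v ++ f w) :=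
        (singleton_sublist.mpr hx).append
          ((singleton_sublist.mpr hy).append (singleton_sublist.mpr hz))
    _ = [u, v, w].flatMap f := by simp
    _ <+ (l.rotate r).flatMap f := hr.flatMap f

end CyclicTriple

namespace ContractionRun

variable {n : ℕ} (R : ContractionRun n)

theorem p_mem_U {t : ℕ} (ht : t ≤ R.T) {x : ℕ} (hx : x < n) : R.p t x ∈ R.U t := by
  induction t with
  | zero => simpa [R.hp0 x hx, R.hU0] using hx
  | succ t ih =>
    obtain ⟨seg, post, rot, hrot, -, -, hU, hp⟩ := R.hstep t (by omega)
    have hmem : R.p t x ∈ R.a t :: (seg ++ R.b t :: post) :=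
      hrot ▸ mem_rotate.mpr (ih (by omega))
    rw [hp x hx, hU]
    split_ifs with hseg
    · simp
    · simp only [mem_cons, mem_append] at hmem
      rcases hmem with h | h | h | h <;> simp_all

theorem cyclicTriple_parent_of_succ {t : ℕ} (ht : t < R.T) {x y z : ℕ}
    (hx : x < n) (hy : y < n) (hz : z < n)
    (h : CyclicTriple (R.U (t + 1)) (R.p (t + 1) x) (R.p (t + 1) y) (R.p (t + 1) z)) :
    CyclicTriple (R.U t) (R.p t x) (R.p t y) (R.p t z) := by
  obtain ⟨seg, post, rot, hrot, -, hfresh, hU, hp⟩ := R.hstep t ht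
  let expand : ℕ → List ℕ := fun c => if c = R.vstar t then seg else [c]
  have expand_of_mem : ∀ c ∈ R.U t, expand c = [c] :=
    fun c hc => if_neg (ne_of_mem_of_not_mem hc hfresh)
  have mem_expand_parent : ∀ q < n, R.p t q ∈ expand (R.p (t + 1) q) := by
    intro q hq
    rw [hp q hq]
    split_ifs with hseg
    · simpa [expand]
    · simp [expand_of_mem _ (R.p_mem_U ht.le hq)]
  have flatMap_expand : (R.U (t + 1)).flatMap expand = (R.U t).rotate rot := by
    have hmem : ∀ c ∈ R.a t :: R.b t :: post, c ∈ R.U t := fun c hc =>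
      (mem_rotate (n := rot)).mp (by rw [hrot]; simp at hc ⊢; tauto)
    have hpost : post.flatMap expand = post := by
      rw [flatMap_congr (g := fun c => [c]) fun c hc => expand_of_mem c (hmem c (by simp [hc]))]
      exact flatMap_singleton' post
    rw [hU, hrot, flatMap_cons, flatMap_cons, flatMap_cons,
      expand_of_mem _ (hmem (R.a t) (by simp)), expand_of_mem _ (hmem (R.b t) (by simp)),
      show expand (R.vstar t) = seg from if_pos rfl, hpost]
    rfl
  exact (h.flatMap (mem_expand_parent x hx) (mem_expand_parent y hy)
    (mem_expand_parent z hz)).of_isRotated (flatMap_expand ▸ IsRotated.forall _ _)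

theorem cyclicTriple_parent_zero {t : ℕ} (ht : t ≤ R.T) {x y z : ℕ}
    (hx : x < n) (hy : y < n) (hz : z < n)
    (h : CyclicTriple (R.U t) (R.p t x) (R.p t y) (R.p t z)) :
    CyclicTriple (R.U 0) (R.p 0 x) (R.p 0 y) (R.p 0 z) := by
  induction t with
  | zero => exact h
  | succ t ih => exact ih (by omega) (R.cyclicTriple_parent_of_succ (by omega) hx hy hz h)

end ContractionRun

/-- the parent map of the transformation algorithm preserves cyclic
order: if `u, v, w` appear in clockwise order on the cycle `U t` of `G_t[U_t]`, then
any original rim vertices `x, y, z` with parents `u, v, w` appear in clockwise order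
on the original cycle. -/
theorem stmt11 (n : ℕ) (R : ContractionRun n) (t : ℕ) (ht : t ≤ R.T)
    (u v w x y z : ℕ) (hx : x < n) (hy : y < n) (hz : z < n)
    (hpu : R.p t x = u) (hpv : R.p t y = v) (hpw : R.p t z = w)
    (h : CyclicTriple (R.U t) u v w) :
    CyclicTriple (R.U 0) x y z := by
  subst hpu hpv hpw
  simpa only [R.hp0 _ hx, R.hp0 _ hy, R.hp0 _ hz] using R.cyclicTriple_parent_zero ht hx hy hz h
end
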